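/- arXiv:2501.08935 — 5 statements merged into one kernel-verified Lean document; each statement's English description precedes it below -/
import Mathlib

section
/- Let A be a commutative ring, B and C commutative A-algebras, and f : C → B a flat ring homomorphism. Let φ₁, …, φ_k ∈ C be elements that are non-zero-divisors in C (hence, by flatness, their images are non-zero-divisors in B). If for each single φ_i the induced map C/(φ_i) → B/(φ_i·B) is an isomorphism, then for every product φ_{i₁} ⋯ φ_{i_k} the induced map C/(φ_{i₁}⋯φ_{i_k}) → B/(φ_{i₁}⋯φ_{i_k}·B) is an isomorphism. -/
/-!
Write `f : R → S` for the ring map and `x, y` for two factors. Divisibility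
`f (x * y) ∣ f z` first gives `z = x * z'` (injectivity for `x`); cancelling the regular
element `f x` leaves `f y ∣ f z'`, so `y ∣ z'` (injectivity for `y`). Surjectivity needs no
regularity: approximate `b` modulo `f x` by `f z₁`, then the error quotient modulo `f y`.
Induction along the list of factors gives the theorem; flatness makes the images of
non-zero-divisors regular.
-/

namespace Ideal

variable {R S : Type*} [CommRing R] [CommRing S] (f : R →+* S)

theorem quotientMap_span_singleton_injective_iff (x : R) :
    Function.Injective (quotientMap ((span {x}).map f) f le_comap_map) ↔
      ∀ y, f x ∣ f y → x ∣ y := by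
  simp only [injective_iff_map_eq_zero, Quotient.mk_surjective.forall, quotientMap_mk,
    Quotient.eq_zero_iff_mem, map_span, Set.image_singleton, mem_span_singleton]

theorem quotientMap_span_singleton_surjective_iff (x : R) :
    Function.Surjective (quotientMap ((span {x}).map f) f le_comap_map) ↔
      ∀ b, ∃ y, f x ∣ b - f y := by
  simp only [Function.Surjective, Quotient.mk_surjective.forall, Quotient.mk_surjective.exists,
    quotientMap_mk, Quotient.mk_eq_mk_iff_sub_mem, map_span, Set.image_singleton,
    mem_span_singleton, dvd_sub_comm]

variable {f}

theorem quotientMap_span_singleton_mul_injective {x y : R} (hx : IsLeftRegular (f x))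
    (hxinj : Function.Injective (quotientMap ((span {x}).map f) f le_comap_map))
    (hyinj : Function.Injective (quotientMap ((span {y}).map f) f le_comap_map)) :
    Function.Injective (quotientMap ((span {x * y}).map f) f le_comap_map) := by
  rw [quotientMap_span_singleton_injective_iff] at *
  rintro z ⟨b, hb⟩
  obtain ⟨z', rfl⟩ := hxinj z ⟨f y * b, by rw [hb, map_mul, mul_assoc]⟩
  rw [map_mul, map_mul, mul_assoc] at hb
  obtain ⟨w, rfl⟩ := hyinj z' ⟨b, hx hb⟩
  exact ⟨w, (mul_assoc x y w).symm⟩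

theorem quotientMap_span_singleton_mul_surjective {x y : R}
    (hxsurj : Function.Surjective (quotientMap ((span {x}).map f) f le_comap_map))
    (hysurj : Function.Surjective (quotientMap ((span {y}).map f) f le_comap_map)) :
    Function.Surjective (quotientMap ((span {x * y}).map f) f le_comap_map) := by
  rw [quotientMap_span_singleton_surjective_iff] at *
  intro b
  obtain ⟨z₁, b', hb'⟩ := hxsurj b
  obtain ⟨z₂, b'', hb''⟩ := hysurj b'
  refine ⟨z₁ + x * z₂, b'', ?_⟩
  rw [map_add, map_mul, map_mul]
  linear_combination hb' + f x * hb''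

theorem quotientMap_span_singleton_one_bijective :
    Function.Bijective (quotientMap ((span {(1 : R)}).map f) f le_comap_map) :=
  ⟨(quotientMap_span_singleton_injective_iff f 1).2 fun y _ ↦ one_dvd y,
    (quotientMap_span_singleton_surjective_iff f 1).2 fun b ↦ ⟨0, by simp⟩⟩

theorem quotientMap_span_singleton_list_prod_bijective {l : List R}
    (hreg : ∀ x ∈ l, IsLeftRegular (f x))
    (hbij : ∀ x ∈ l, Function.Bijective (quotientMap ((span {x}).map f) f le_comap_map)) :
    Function.Bijective (quotientMap ((span {l.prod}).map f) f le_comap_map) := by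
  induction l with
  | nil => exact quotientMap_span_singleton_one_bijective
  | cons x l ih =>
    simp only [List.mem_cons, forall_eq_or_imp] at hreg hbij
    have hl := ih hreg.2 hbij.2
    exact ⟨quotientMap_span_singleton_mul_injective hreg.1 hbij.1.1 hl.1,
      quotientMap_span_singleton_mul_surjective hbij.1.2 hl.2⟩

end Ideal

theorem stmt0_general (C B : Type*) [CommRing C] [CommRing B]
    [Algebra C B] [Module.Flat C B]
    (k : ℕ) (φ : Fin k → C) (hreg : ∀ i, φ i ∈ nonZeroDivisors C)
    (hiso : ∀ i, Function.Bijective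
      (Ideal.quotientMap ((Ideal.span {φ i}).map (algebraMap C B))
        (algebraMap C B) Ideal.le_comap_map))
    (l : List (Fin k)) :
    Function.Bijective
      (Ideal.quotientMap ((Ideal.span {(l.map φ).prod}).map (algebraMap C B))
        (algebraMap C B) Ideal.le_comap_map) := by
  have hflat_reg (i : Fin k) : IsLeftRegular (algebraMap C B (φ i)) :=
    ((isSMulRegular_algebraMap_iff B).2
      (Module.Flat.isSMulRegular_of_nonZeroDivisors (hreg i))).isLeftRegular
  exact Ideal.quotientMap_span_singleton_list_prod_bijective
    (List.forall_mem_map.2 fun i _ ↦ hflat_reg i) (List.forall_mem_map.2 fun i _ ↦ hiso i)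

/-- If `B` is a flat `C`-algebra (both `A`-algebras), the `φ i` are
non-zero-divisors of `C`, and each induced map `C/(φ i) → B/(φ i · B)` is an
isomorphism, then for every product `φ i₁ ⋯ φ i_k` (indexed by a list `l`)
the induced map `C/(∏) → B/(∏ · B)` is an isomorphism. -/
theorem stmt0 (A C B : Type*) [CommRing A] [CommRing C] [CommRing B]
    [Algebra A C] [Algebra A B] [Algebra C B] [Module.Flat C B]
    (k : ℕ) (φ : Fin k → C) (hreg : ∀ i, φ i ∈ nonZeroDivisors C)
    (hiso : ∀ i, Function.Bijective
      (Ideal.quotientMap ((Ideal.span {φ i}).map (algebraMap C B))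
        (algebraMap C B) Ideal.le_comap_map))
    (l : List (Fin k)) :
    Function.Bijective
      (Ideal.quotientMap ((Ideal.span {(l.map φ).prod}).map (algebraMap C B))
        (algebraMap C B) Ideal.le_comap_map) :=
  stmt0_general C B k φ hreg hiso l
end

section
/- Let A be a commutative ring, a₁,…,a_n ∈ A, φ(t) = ∏(t−a_i), and define φ⁺_{m,i}(t) = φ(t)^m(t−a₁)⋯(t−a_i), φ⁻_{m,j}(t) = φ(t)^m(t−a_{n−j+1})⋯(t−a_n) for m ∈ ℤ, 0 ≤ i,j ≤ n−1, viewed in the localization A[t,φ^{-1}]. Let Res : A[t,φ^{-1}]dt → A denote the total residue (sum of formal residues at a₁,…,a_n, defined via completion). Then Res(φ⁺_{a,i}·φ⁻_{b,j} dt) = δ_{a+b,−1}·δ_{i+j,n−1}, and Res(φ⁻_{c,i}·φ⁻_{d,j} dt) = 0 for all c,d < 0. -/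
/-!
Residue theorem on the projective line: if `deg P < M n`, the residues of `P dt / φ^M` at the
`n` distinct roots of `φ` add up to the coefficient of `t^{Mn-1}` in `P` (minus the residue at
infinity). This is read off a partial fraction decomposition `P / φ^M = ∑ rᵢ / (t - aᵢ)^M`
with `deg rᵢ < M`: the residue at `aᵢ` is the top coefficient of `rᵢ`, and comparing
coefficients of `t^{Mn-1}` in `P = ∑ rᵢ ∏_{k ≠ i} (t - a_k)^M` gives the same sum.

Both products in the theorem are `φ^k` times a monic polynomial of degree `i + j ≤ 2n - 2`.
For `k ≥ 0` there is no pole; for `k ≤ -2`, and for `k = -1` with `i + j < n`, the residue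
is the coefficient of `t^{-kn-1}`, which is `1` exactly when `k = -1` and `i + j = n - 1`;
for `k = -1` and `i + j ≥ n` the two products overlap in all of `φ`, so again there is no pole.
-/

open Polynomial

namespace Stmt4

variable (n : ℕ) (a : ℕ → ℂ)

/-- `φ(t) = ∏_{j<n} (t - a j)` as a rational function. -/
noncomputable def phi : RatFunc ℂ :=
  ∏ j ∈ Finset.range n, (RatFunc.X - RatFunc.C (a j))

/-- `φ⁺_{m,i}(t) = φ(t)^m (t-a 0)⋯(t-a (i-1))`, for `m ∈ ℤ`. -/
noncomputable def phiPlus (m : ℤ) (i : ℕ) : RatFunc ℂ :=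
  phi n a ^ m * ∏ j ∈ Finset.range i, (RatFunc.X - RatFunc.C (a j))

/-- `φ⁻_{m,j}(t) = φ(t)^m (t-a (n-j))⋯(t-a (n-1))`, for `m ∈ ℤ`
(the last `j` linear factors). -/
noncomputable def phiMinus (m : ℤ) (j : ℕ) : RatFunc ℂ :=
  phi n a ^ m * ∏ k ∈ Finset.Ico (n - j) n, (RatFunc.X - RatFunc.C (a k))

/-- The total residue `Res(f dt)`: the sum of the residues of `f dt` at the
points `a 0, …, a (n-1)` (coefficient of `(t - a i)⁻¹` in the Laurent
expansion at `a i`). -/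
noncomputable def Res (f : RatFunc ℂ) : ℂ :=
  ∑ i ∈ Finset.range n, ((RatFunc.laurent (a i) f : RatFunc ℂ) : LaurentSeries ℂ).coeff (-1)

section Residue

variable {K : Type*} [Field K]

open scoped LaurentSeries PowerSeries RatFunc

noncomputable def resAt (b : K) : K⟮X⟯ →+ K :=
  (HahnSeries.coeff.addMonoidHom (-1)).comp
    ((algebraMap K⟮X⟯ K⸨X⸩).toAddMonoidHom.comp (RatFunc.laurent b).toAddMonoidHom)

theorem resAt_apply (b : K) (f : K⟮X⟯) :
    resAt b f = ((RatFunc.laurent b f : K⟮X⟯) : K⸨X⸩).coeff (-1) := rfl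

theorem coe_powerSeries_inv {f : K⟦X⟧} (hf : PowerSeries.constantCoeff f ≠ 0) :
    ((f⁻¹ : K⟦X⟧) : K⸨X⸩) = (f : K⸨X⸩)⁻¹ := by
  refine eq_inv_of_mul_eq_one_right ?_
  rw [← PowerSeries.coe_mul, PowerSeries.mul_inv_cancel _ hf, PowerSeries.coe_one]

theorem coe_algebraMap_polynomial (p : K[X]) :
    ((algebraMap K[X] K⟮X⟯ p : K⟮X⟯) : K⸨X⸩) = ((p : K⟦X⟧) : K⸨X⸩) :=
  (RatFunc.coe_coe p).symm

theorem coe_laurent_div_X_sub_C_pow_mul (b : K) (P : K[X]) {Q : K[X]} (s : ℕ)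
    (hQ : Q.eval b ≠ 0) :
    ((RatFunc.laurent b (algebraMap K[X] K⟮X⟯ P /
        algebraMap K[X] K⟮X⟯ ((X - C b) ^ s * Q)) : K⟮X⟯) : K⸨X⸩) =
      HahnSeries.single (-(s : ℤ)) 1 *
        (((taylor b P : K⟦X⟧) * (taylor b Q : K⟦X⟧)⁻¹ : K⟦X⟧) : K⸨X⸩) := by
  have hQ' : PowerSeries.constantCoeff (taylor b Q : K⟦X⟧) ≠ 0 := by
    rwa [← PowerSeries.coeff_zero_eq_constantCoeff_apply, Polynomial.coeff_coe, taylor_coeff_zero]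
  rw [RatFunc.laurent_div, map_div₀, coe_algebraMap_polynomial, coe_algebraMap_polynomial,
    taylor_mul, taylor_pow, map_sub, taylor_X, taylor_C, add_sub_cancel_right, Polynomial.coe_mul,
    Polynomial.coe_pow, Polynomial.coe_X, PowerSeries.coe_mul, PowerSeries.coe_pow,
    PowerSeries.coe_X, ← RatFunc.single_one_eq_pow, PowerSeries.coe_mul, coe_powerSeries_inv hQ',
    div_eq_mul_inv, mul_inv, HahnSeries.inv_single, inv_one]
  ring

theorem resAt_div_of_eval_ne_zero (b : K) (P : K[X]) {Q : K[X]} (hQ : Q.eval b ≠ 0) :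
    resAt b (algebraMap K[X] K⟮X⟯ P / algebraMap K[X] K⟮X⟯ Q) = 0 := by
  have h := coe_laurent_div_X_sub_C_pow_mul b P 0 hQ
  rw [pow_zero, one_mul, Nat.cast_zero, neg_zero, ← HahnSeries.C_apply, map_one, one_mul] at h
  rw [resAt_apply, h, PowerSeries.coeff_coe, if_pos (by norm_num)]

theorem resAt_algebraMap (b : K) (P : K[X]) : resAt b (algebraMap K[X] K⟮X⟯ P) = 0 := by
  simpa using resAt_div_of_eval_ne_zero b P (Q := 1) (by simp)

theorem resAt_div_X_sub_C_pow_succ (b : K) (P : K[X]) (m : ℕ) :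
    resAt b (algebraMap K[X] K⟮X⟯ P / algebraMap K[X] K⟮X⟯ ((X - C b) ^ (m + 1))) =
      (taylor b P).coeff m := by
  have h := coe_laurent_div_X_sub_C_pow_mul b P (Q := 1) (m + 1) (by simp)
  simp only [mul_one, taylor_one, C_1, Polynomial.coe_one, inv_one] at h
  have hidx : (-1 : ℤ) = m + -((m + 1 : ℕ) : ℤ) := by push_cast; ring
  rw [resAt_apply, h, hidx, HahnSeries.coeff_single_mul_add, one_mul, PowerSeries.coeff_coe,
    if_neg (by omega), Int.natAbs_natCast, Polynomial.coeff_coe]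

theorem coeff_taylor_of_natDegree_le (r : K) {p : K[X]} {m : ℕ} (hp : p.natDegree ≤ m) :
    (taylor r p).coeff m = p.coeff m := by
  rcases hp.lt_or_eq with hp | rfl
  · rw [coeff_eq_zero_of_natDegree_lt hp,
      coeff_eq_zero_of_natDegree_lt (by rwa [natDegree_taylor])]
  · exact coeff_taylor_natDegree (r := r) (f := p)

theorem resAt_sum_div_X_sub_C_pow_succ {ι : Type*} {s : Finset ι} {v : ι → K}
    (hv : Set.InjOn v s) {m : ℕ} {r : ι → K[X]} (hr : ∀ j ∈ s, (r j).natDegree ≤ m)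
    {i : ι} (hi : i ∈ s) :
    resAt (v i) (∑ j ∈ s, algebraMap K[X] K⟮X⟯ (r j) /
      algebraMap K[X] K⟮X⟯ ((X - C (v j)) ^ (m + 1))) = (r i).coeff m := by
  rw [map_sum, Finset.sum_eq_single_of_mem i hi, resAt_div_X_sub_C_pow_succ,
    coeff_taylor_of_natDegree_le _ (hr i hi)]
  intro j hj hji
  refine resAt_div_of_eval_ne_zero _ _ ?_
  rw [eval_pow, eval_sub, eval_X, eval_C]
  exact pow_ne_zero _ (sub_ne_zero.2 (hv.ne hi hj hji.symm))

theorem add_natDegree_prod_erase_X_sub_C_pow {ι : Type*} [DecidableEq ι] {s : Finset ι}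
    (v : ι → K) (m : ℕ) {i : ι} (hi : i ∈ s) :
    m + (∏ k ∈ s.erase i, (X - C (v k)) ^ (m + 1)).natDegree = (m + 1) * s.card - 1 := by
  rw [natDegree_prod_of_monic _ _ fun k _ => (monic_X_sub_C _).pow _]
  simp only [natDegree_pow, natDegree_X_sub_C, mul_one, Finset.sum_const, smul_eq_mul,
    Finset.card_erase_of_mem hi]
  obtain ⟨c, hc⟩ := Nat.exists_eq_add_one_of_ne_zero (Finset.card_ne_zero_of_mem hi)
  rw [hc, Nat.add_sub_cancel, show (m + 1) * (c + 1) = m + c * (m + 1) + 1 by ring,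
    Nat.add_sub_cancel]

theorem exists_eq_sum_mul_prod_erase_X_sub_C_pow {ι : Type*} [DecidableEq ι] {s : Finset ι}
    {v : ι → K} (hv : Set.InjOn v s) (m : ℕ) {P : K[X]}
    (hP : P.degree < ↑((m + 1) * s.card)) :
    ∃ r : ι → K[X], (∀ i ∈ s, (r i).natDegree ≤ m) ∧
      P = ∑ i ∈ s, r i * ∏ k ∈ s.erase i, (X - C (v k)) ^ (m + 1) := by
  set g : ι → K[X] := fun j => (X - C (v j)) ^ (m + 1)
  have hg : ∀ j ∈ s, (g j).Monic := fun j _ => (monic_X_sub_C _).pow _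
  have hcop : Set.Pairwise s fun i j => IsCoprime (g i) (g j) := fun i hi j hj hij =>
    (isCoprime_X_sub_C_of_isUnit_sub (sub_ne_zero.2 (hv.ne hi hj hij)).isUnit).pow
  obtain ⟨q, r, hr, hPqr⟩ := eq_quo_mul_prod_add_sum_rem_mul_prod P hg hcop
  have hrm : ∀ i ∈ s, (r i).natDegree ≤ m := fun i hi => by
    have h := hr i hi
    rw [degree_pow, degree_X_sub_C, nsmul_one] at h
    exact natDegree_le_of_degree_le (Order.le_of_lt_succ h)
  refine ⟨r, hrm, ?_⟩
  have hG : (∏ i ∈ s, g i).Monic := monic_prod_of_monic _ _ hg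
  have hGdeg : (∏ i ∈ s, g i).natDegree = (m + 1) * s.card := by
    rw [natDegree_prod_of_monic _ _ hg]
    simp [g, mul_comm]
  have hRdeg :
      (∑ i ∈ s, r i * ∏ k ∈ s.erase i, g k).degree < (∏ i ∈ s, g i).degree := by
    rcases s.eq_empty_or_nonempty with rfl | ⟨i₀, hi₀⟩
    · simp
    refine degree_lt_degree ((natDegree_sum_le_of_forall_le (n := (m + 1) * s.card - 1) _ _
      fun i hi => ?_).trans_lt ?_)
    · rw [← add_natDegree_prod_erase_X_sub_C_pow v m hi]
      exact natDegree_mul_le.trans (Nat.add_le_add_right (hrm i hi) _)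
    · rw [hGdeg]
      exact Nat.sub_lt (Nat.mul_pos m.succ_pos (Finset.card_pos.2 ⟨i₀, hi₀⟩)) one_pos
  have hq : q = 0 := by
    rw [← (div_modByMonic_unique (f := P) q _ hG ⟨by rw [hPqr]; ring, hRdeg⟩).1,
      divByMonic_eq_zero_iff hG, degree_eq_natDegree hG.ne_zero, hGdeg]
    exact hP
  rw [hPqr, hq, zero_mul, zero_add]

theorem sum_resAt_div_nodal_pow {ι : Type*} {s : Finset ι} {v : ι → K}
    (hv : Set.InjOn v s) (M : ℕ) {P : K[X]} (hP : P.degree < ↑(M * s.card)) :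
    ∑ i ∈ s, resAt (v i)
        (algebraMap K[X] K⟮X⟯ P / algebraMap K[X] K⟮X⟯ (Lagrange.nodal s v ^ M)) =
      P.coeff (M * s.card - 1) := by
  classical
  rw [Lagrange.nodal_eq, ← Finset.prod_pow]
  rcases M with _ | m
  · have hP0 : P = 0 := by
      by_contra hP0
      exact (zero_le_degree_iff.2 hP0).not_gt (by simpa using hP)
    simp [hP0]
  obtain ⟨r, hrm, hPr⟩ := exists_eq_sum_mul_prod_erase_X_sub_C_pow hv m hP
  have hG : ∀ i, (∏ k ∈ s.erase i, (X - C (v k)) ^ (m + 1)).Monic := fun i =>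
    monic_prod_of_monic _ _ fun k _ => (monic_X_sub_C _).pow _
  have hfrac :
      algebraMap K[X] K⟮X⟯ P / algebraMap K[X] K⟮X⟯ (∏ j ∈ s, (X - C (v j)) ^ (m + 1)) =
        ∑ i ∈ s, algebraMap K[X] K⟮X⟯ (r i) /
          algebraMap K[X] K⟮X⟯ ((X - C (v i)) ^ (m + 1)) := by
    rw [hPr, map_sum, Finset.sum_div]
    refine Finset.sum_congr rfl fun i hi => ?_
    rw [← Finset.mul_prod_erase s _ hi, map_mul, map_mul,
      mul_div_mul_right _ _ (RatFunc.algebraMap_ne_zero (hG i).ne_zero)]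
  calc _ = ∑ i ∈ s, (r i).coeff m :=
        Finset.sum_congr rfl fun i hi => by rw [hfrac, resAt_sum_div_X_sub_C_pow_succ hv hrm hi]
    _ = P.coeff ((m + 1) * s.card - 1) := by
      rw [hPr, finsetSum_coeff]
      refine Finset.sum_congr rfl fun i hi => ?_
      rw [← add_natDegree_prod_erase_X_sub_C_pow v m hi, coeff_mul_add_eq_of_natDegree_le
        (hrm i hi) le_rfl, (hG i).coeff_natDegree, mul_one]

theorem algebraMap_nodal {ι : Type*} (s : Finset ι) (v : ι → K) :
    algebraMap K[X] K⟮X⟯ (Lagrange.nodal s v) = ∏ i ∈ s, (RatFunc.X - RatFunc.C (v i)) := by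
  simp [Lagrange.nodal_eq, map_prod]

theorem coeff_of_monic_of_natDegree_le {p : K[X]} (hp : p.Monic) {k : ℕ}
    (hk : p.natDegree ≤ k) :
    p.coeff k = if p.natDegree = k then 1 else 0 := by
  split_ifs with h
  · exact h ▸ hp.coeff_natDegree
  · exact coeff_eq_zero_of_natDegree_lt (lt_of_le_of_ne hk h)

end Residue

local notation "εp" => algebraMap ℂ[X] (RatFunc ℂ)

theorem Res_eq_sum_resAt (f : RatFunc ℂ) : Res n a f = ∑ i ∈ Finset.range n, resAt (a i) f :=
  rfl

theorem phi_eq_algebraMap_nodal : phi n a = εp (Lagrange.nodal (Finset.range n) a) :=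
  (algebraMap_nodal _ _).symm

theorem phi_ne_zero : phi n a ≠ 0 := by
  rw [phi_eq_algebraMap_nodal]
  exact RatFunc.algebraMap_ne_zero Lagrange.nodal_ne_zero

theorem Res_algebraMap (P : ℂ[X]) : Res n a (εp P) = 0 :=
  Finset.sum_eq_zero fun i _ => resAt_algebraMap (a i) P

theorem Res_phi_zpow_natCast_mul (k : ℕ) (P : ℂ[X]) :
    Res n a (phi n a ^ (k : ℤ) * εp P) = 0 := by
  rw [zpow_natCast, phi_eq_algebraMap_nodal, ← map_pow, ← map_mul, Res_algebraMap]

theorem Res_phi_zpow_neg_mul (hinj : Set.InjOn a (Finset.range n)) (m : ℕ) {P : ℂ[X]}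
    (hP : P.degree < ↑(m * n)) :
    Res n a (phi n a ^ (-(m : ℤ)) * εp P) = P.coeff (m * n - 1) := by
  have h := sum_resAt_div_nodal_pow hinj m (P := P) (by rwa [Finset.card_range])
  rw [Finset.card_range, map_pow, ← phi_eq_algebraMap_nodal] at h
  rw [Res_eq_sum_resAt, zpow_neg, zpow_natCast, inv_mul_eq_div, h]

theorem Res_phi_zpow_neg_mul_nodal_mul_nodal (hinj : Set.InjOn a (Finset.range n)) {m : ℕ}
    {s t : Finset ℕ} (hst : s.card + t.card < m * n) :
    Res n a (phi n a ^ (-(m : ℤ)) * εp (Lagrange.nodal s a * Lagrange.nodal t a)) =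
      if s.card + t.card = m * n - 1 then 1 else 0 := by
  have hN : (Lagrange.nodal s a * Lagrange.nodal t a).Monic :=
    Lagrange.nodal_monic.mul Lagrange.nodal_monic
  have hdeg : (Lagrange.nodal s a * Lagrange.nodal t a).natDegree = s.card + t.card := by
    rw [natDegree_mul Lagrange.nodal_ne_zero Lagrange.nodal_ne_zero, Lagrange.natDegree_nodal,
      Lagrange.natDegree_nodal]
  have hdeg' : (Lagrange.nodal s a * Lagrange.nodal t a).degree < ↑(m * n) := by
    rw [degree_eq_natDegree hN.ne_zero, hdeg]
    exact_mod_cast hst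
  rw [Res_phi_zpow_neg_mul n a hinj m hdeg', coeff_of_monic_of_natDegree_le hN (by omega), hdeg]

theorem phi_zpow_mul_prod_mul_phi_zpow_mul_prod (p q : ℤ) (s t : Finset ℕ) :
    (phi n a ^ p * ∏ k ∈ s, (RatFunc.X - RatFunc.C (a k))) *
      (phi n a ^ q * ∏ k ∈ t, (RatFunc.X - RatFunc.C (a k))) =
      phi n a ^ (p + q) * εp (Lagrange.nodal s a * Lagrange.nodal t a) := by
  rw [map_mul, algebraMap_nodal, algebraMap_nodal, zpow_add₀ (phi_ne_zero n a)]
  ring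

theorem nodal_range_mul_nodal_Ico {i j : ℕ} (hji : j ≤ i) (hi : i ≤ n) :
    Lagrange.nodal (Finset.range i) a * Lagrange.nodal (Finset.Ico j n) a =
      Lagrange.nodal (Finset.range n) a * Lagrange.nodal (Finset.Ico j i) a := by
  simp only [Lagrange.nodal_eq]
  rw [← Finset.prod_range_mul_prod_Ico _ hji, ← Finset.prod_range_mul_prod_Ico _ (hji.trans hi)]
  ring

theorem card_Ico_sub_self {j : ℕ} (hj : j ≤ n) : (Finset.Ico (n - j) n).card = j := by
  rw [Nat.card_Ico, Nat.sub_sub_self hj]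

theorem Res_phiPlus_mul_phiMinus (hinj : Set.InjOn a (Finset.range n)) (p q : ℤ) {i j : ℕ}
    (hi : i < n) (hj : j < n) :
    Res n a (phiPlus n a p i * phiMinus n a q j) =
      (if p + q = -1 then (1 : ℂ) else 0) * (if i + j = n - 1 then 1 else 0) := by
  rw [phiPlus, phiMinus, phi_zpow_mul_prod_mul_phi_zpow_mul_prod]
  rcases le_or_gt 0 (p + q) with hpq | hpq
  · obtain ⟨k, hk⟩ := Int.eq_ofNat_of_zero_le hpq
    rw [hk, Res_phi_zpow_natCast_mul, if_neg (by omega), zero_mul]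
  obtain ⟨k, hk⟩ := Int.exists_eq_neg_ofNat hpq.le
  have hcard : (Finset.range i).card + (Finset.Ico (n - j) n).card = i + j := by
    rw [Finset.card_range, card_Ico_sub_self n hj.le]
  obtain rfl | hk2 : k = 1 ∨ 2 ≤ k := by omega
  · by_cases hij : i + j < n
    · rw [hk, Res_phi_zpow_neg_mul_nodal_mul_nodal n a hinj (hcard ▸ (by omega : i + j < 1 * n)),
        hcard]
      simp
    · rw [hk, Nat.cast_one, nodal_range_mul_nodal_Ico n a (by omega) hi.le, map_mul,
        ← phi_eq_algebraMap_nodal,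
        zpow_neg_one, inv_mul_cancel_left₀ (phi_ne_zero n a), Res_algebraMap,
        if_neg (show ¬i + j = n - 1 by omega), mul_zero]
  · have := Nat.mul_le_mul_right n hk2
    rw [hk, Res_phi_zpow_neg_mul_nodal_mul_nodal n a hinj (hcard ▸ (by omega : i + j < k * n)),
      hcard, if_neg (by omega), if_neg (by omega), zero_mul]

theorem Res_phiMinus_mul_phiMinus (hinj : Set.InjOn a (Finset.range n)) {c d : ℤ} {i j : ℕ}
    (hc : c < 0) (hd : d < 0) (hi : i < n) (hj : j < n) :
    Res n a (phiMinus n a c i * phiMinus n a d j) = 0 := by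
  obtain ⟨k, hk⟩ := Int.exists_eq_neg_ofNat (by omega : c + d ≤ 0)
  have hcard : (Finset.Ico (n - i) n).card + (Finset.Ico (n - j) n).card = i + j := by
    rw [card_Ico_sub_self n hi.le, card_Ico_sub_self n hj.le]
  have := Nat.mul_le_mul_right n (show 2 ≤ k by omega)
  rw [phiMinus, phiMinus, phi_zpow_mul_prod_mul_phi_zpow_mul_prod, hk,
    Res_phi_zpow_neg_mul_nodal_mul_nodal n a hinj (by omega), if_neg (by omega)]

/-- `Res(φ⁺_{p,i} φ⁻_{q,j} dt) = δ_{p+q,-1} δ_{i+j,n-1}`, and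
`Res(φ⁻_{c,i} φ⁻_{d,j} dt) = 0` for `c, d < 0`. -/
theorem stmt4 (hdist : ∀ i < n, ∀ j < n, a i = a j → i = j) :
    (∀ (p q : ℤ) (i j : ℕ), i < n → j < n →
      Res n a (phiPlus n a p i * phiMinus n a q j) =
        (if p + q = -1 then (1 : ℂ) else 0) * (if i + j = n - 1 then 1 else 0))
    ∧ (∀ (c d : ℤ) (i j : ℕ), c < 0 → d < 0 → i < n → j < n →
      Res n a (phiMinus n a c i * phiMinus n a d j) = 0) := by
  have hinj : Set.InjOn a (Finset.range n) := fun x hx y hy =>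
    hdist x (Finset.mem_range.1 hx) y (Finset.mem_range.1 hy)
  exact ⟨fun p q i j hi hj => Res_phiPlus_mul_phiMinus n a hinj p q hi hj,
    fun c d i j hc hd hi hj => Res_phiMinus_mul_phiMinus n a hinj hc hd hi hj⟩

end Stmt4
end

section
/- With notation as above, in the completed ring B = lim_m A[u,v,φ(u)^{-1},φ(v)^{-1}]/(φ(v)^m·A[u,v,φ(u)^{-1}]), the right expansion of 1/(u−v) satisfies Exp^r(1/(u−v)) = Σ_{m≥0, 0≤i≤n−1} φ⁻_{−m−1,n−i−1}(u) · φ⁺_{m,i}(v), where φ⁺_{m,i}(t) = φ(t)^m(t−a₁)⋯(t−a_i) and φ⁻_{m,j}(t) = φ(t)^m(t−a_{n−j+1})⋯(t−a_n). -/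
open MvPolynomial

namespace Stmt7

variable (A : Type*) [CommRing A] (n : ℕ) (a : ℕ → A)

/-- `A[u,v]` with `u = X 0`, `v = X 1`. -/
abbrev P := MvPolynomial (Fin 2) A

/-- `φ(u)`. -/
noncomputable def phiU : P A := ∏ i ∈ Finset.range n, (X 0 - C (a i))

/-- `φ(v)`. -/
noncomputable def phiV : P A := ∏ i ∈ Finset.range n, (X 1 - C (a i))

/-- `A[u,v,φ(u)⁻¹]`. -/
abbrev S := Localization.Away (phiU A n a)

/-- `φ⁻_{-m-1,n-i-1}(u) = φ(u)^{-(m+1)} (u - a (i+1))⋯(u - a (n-1))`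
(the last `n-i-1` linear factors in `u`), as an element of `A[u,v,φ(u)⁻¹]`. -/
noncomputable def phiMinusU (m i : ℕ) : S A n a :=
  (IsLocalization.Away.invSelf (S := S A n a) (phiU A n a)) ^ (m + 1) *
    algebraMap (P A) (S A n a) (∏ k ∈ Finset.Ico (i + 1) n, (X 0 - C (a k)))

/-- `φ⁺_{m,i}(v) = φ(v)^m (v - a 0)⋯(v - a (i-1))`. -/
noncomputable def phiPlusV (m i : ℕ) : S A n a :=
  algebraMap (P A) (S A n a) (phiV A n a) ^ m *
    algebraMap (P A) (S A n a) (∏ j ∈ Finset.range i, (X 1 - C (a j)))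

/-- Telescoping polynomial identity:
`(Σ_i (u-a_{i+1})⋯(u-a_{n-1})·(v-a_0)⋯(v-a_{i-1}))·(u-v) = φ(u) - φ(v)`. -/
lemma key_poly :
    (∑ i ∈ Finset.range n,
        (∏ k ∈ Finset.Ico (i + 1) n, ((X 0 : P A) - C (a k))) *
          ∏ j ∈ Finset.range i, ((X 1 : P A) - C (a j))) * (X 0 - X 1)
      = phiU A n a - phiV A n a := by
  rw [Finset.sum_mul]
  have hterm : ∀ i ∈ Finset.range n,
      (∏ k ∈ Finset.Ico (i + 1) n, ((X 0 : P A) - C (a k))) *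
          (∏ j ∈ Finset.range i, ((X 1 : P A) - C (a j))) * (X 0 - X 1)
        = (fun i => (∏ k ∈ Finset.Ico i n, ((X 0 : P A) - C (a k))) *
            ∏ j ∈ Finset.range i, ((X 1 : P A) - C (a j))) i
          - (fun i => (∏ k ∈ Finset.Ico i n, ((X 0 : P A) - C (a k))) *
            ∏ j ∈ Finset.range i, ((X 1 : P A) - C (a j))) (i + 1) := by
    intro i hi
    have hi' : i < n := Finset.mem_range.mp hi
    simp only
    rw [Finset.prod_eq_prod_Ico_succ_bot hi' (fun k => (X 0 : P A) - C (a k)),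
      Finset.prod_range_succ]
    ring
  rw [Finset.sum_congr rfl hterm,
    Finset.sum_range_sub' (f := fun i => (∏ k ∈ Finset.Ico i n, ((X 0 : P A) - C (a k))) *
      ∏ j ∈ Finset.range i, ((X 1 : P A) - C (a j))) n]
  simp [phiU, phiV, ← Finset.range_eq_Ico, Finset.Ico_self]

/-- the right expansion of `1/(u-v)` is
`Exp^r(1/(u-v)) = Σ_{m≥0, 0≤i≤n-1} φ⁻_{-m-1,n-i-1}(u) φ⁺_{m,i}(v)`: at every
finite level `N` of the completion `lim_N A[u,v,φ(u)⁻¹]/(φ(v)^N)`, the truncated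
series multiplied by `(u - v)` equals `1`. -/
theorem stmt7 (N : ℕ) :
    Ideal.Quotient.mk
        (Ideal.span {algebraMap (P A) (S A n a) (phiV A n a) ^ N})
        ((∑ m ∈ Finset.range N, ∑ i ∈ Finset.range n,
            phiMinusU A n a m i * phiPlusV A n a m i) *
          algebraMap (P A) (S A n a) (X 0 - X 1))
      = 1 := by
  have hw : algebraMap (P A) (S A n a) (phiU A n a) *
      IsLocalization.Away.invSelf (S := S A n a) (phiU A n a) = 1 :=
    IsLocalization.Away.mul_invSelf (S := S A n a) (x := phiU A n a)
  set ψ := algebraMap (P A) (S A n a) with hψ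
  set w := IsLocalization.Away.invSelf (S := S A n a) (phiU A n a) with hwdef
  have hsum : (∑ m ∈ Finset.range N, ∑ i ∈ Finset.range n,
      phiMinusU A n a m i * phiPlusV A n a m i) * ψ (X 0 - X 1)
      = 1 - w ^ N * ψ (phiV A n a) ^ N := by
    rw [Finset.sum_mul]
    have hinner : ∀ m, (∑ i ∈ Finset.range n,
        phiMinusU A n a m i * phiPlusV A n a m i) * ψ (X 0 - X 1)
        = (fun m => w ^ m * ψ (phiV A n a) ^ m) m
          - (fun m => w ^ m * ψ (phiV A n a) ^ m) (m + 1) := by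
      intro m
      have h1 : (∑ i ∈ Finset.range n,
          phiMinusU A n a m i * phiPlusV A n a m i) * ψ (X 0 - X 1)
          = w ^ (m + 1) * ψ (phiV A n a) ^ m *
            ψ ((∑ i ∈ Finset.range n,
                (∏ k ∈ Finset.Ico (i + 1) n, ((X 0 : P A) - C (a k))) *
                  ∏ j ∈ Finset.range i, ((X 1 : P A) - C (a j))) * (X 0 - X 1)) := by
        simp only [map_mul, map_sum, Finset.sum_mul, Finset.mul_sum]
        refine Finset.sum_congr rfl fun i _ => ?_
        simp only [phiMinusU, phiPlusV, map_mul]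
        ring
      rw [h1, key_poly, map_sub]
      simp only
      linear_combination (w ^ m * ψ (phiV A n a) ^ m) * hw
    rw [Finset.sum_congr rfl fun m _ => hinner m,
      Finset.sum_range_sub' (fun m => w ^ m * ψ (phiV A n a) ^ m) N]
    simp
  rw [hsum]
  have h2 : (1 - w ^ N * ψ (phiV A n a) ^ N) - 1
      ∈ Ideal.span {ψ (phiV A n a) ^ N} := by
    simpa using (Ideal.span {ψ (phiV A n a) ^ N}).neg_mem
      (Ideal.mul_mem_left _ (w ^ N) (Ideal.subset_span rfl))
  calc Ideal.Quotient.mk (Ideal.span {ψ (phiV A n a) ^ N}) (1 - w ^ N * ψ (phiV A n a) ^ N)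
      = Ideal.Quotient.mk (Ideal.span {ψ (phiV A n a) ^ N}) 1 := Ideal.Quotient.eq.mpr h2
    _ = 1 := map_one _

end Stmt7
end

section
/- Kashiwara decomposition in one variable: Let A be a ℚ-algebra, and let N be a right module over the Weyl-type algebra A[v,y,∂_v,∂_y] (y, v commuting variables, [∂_y, y] = 1 etc.). Suppose every element of N is annihilated by some power of y. Let h = ∂_y·y acting on the right. Then N decomposes as N = ⊕_{i≥1} N(i), where N(i) is the eigenspace of h with eigenvalue i, and the right action of ∂_y maps N(i) to N(i+1) bijectively for all i ≥ 1. -/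
/-!
Write `h = y * d` for the Euler operator of a pair with `y * d - d * y = 1`. Commuting `d` past
`y` gives `d ^ k * y ^ k = (h - 1) ⋯ (h - k)`, so an element killed by `y ^ k` is killed by this
product; over a `ℚ`-algebra the factors are pairwise coprime, so their kernels, the eigenspaces
`E 1, …, E k`, are independent and span the kernel of the product. Moreover `h * d = d * (h + 1)`
and `d * y = h - 1`, so `d : E c → E (c + 1)` and `y : E (c + 1) → E c` compose to multiplication
by `c` both ways, which is invertible for `c = 1, 2, …`.
-/

open Polynomial Module

namespace Polynomial

variable {R M ι : Type*} [CommRing R] [AddCommGroup M] [Module R M]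

open scoped Function in
theorem iSup_ker_aeval_eq_ker_aeval_prod (f : End R M) {q : ι → R[X]} {s : Finset ι}
    (hq : (s : Set ι).Pairwise (IsCoprime on q)) :
    ⨆ i ∈ s, LinearMap.ker (aeval f (q i)) = LinearMap.ker (aeval f (∏ i ∈ s, q i)) := by
  classical
  induction s using Finset.induction_on with
  | empty => simp [End.one_eq_id]
  | insert a s ha ih =>
    have hcop : IsCoprime (q a) (∏ i ∈ s, q i) := IsCoprime.prod_right fun j hj =>
      hq (Finset.mem_insert_self a s) (Finset.mem_insert_of_mem hj)
        (ne_of_mem_of_not_mem hj ha).symm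
    rw [Finset.iSup_insert, Finset.prod_insert ha, ih (hq.mono (by simp)),
      sup_ker_aeval_eq_ker_aeval_mul_of_coprime f hcop]

open scoped Function in
theorem iSupIndep_ker_aeval (f : End R M) {q : ι → R[X]} (hq : Pairwise (IsCoprime on q)) :
    iSupIndep fun i => LinearMap.ker (aeval f (q i)) := by
  classical
  refine iSupIndep_iff_supIndep.2 fun s => Finset.supIndep_iff_disjoint_erase.2 fun i _ => ?_
  rw [Finset.sup_eq_iSup, iSup_ker_aeval_eq_ker_aeval_prod f (hq.set_pairwise _)]
  exact disjoint_ker_aeval_of_isCoprime f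
    (IsCoprime.prod_right fun j hj => hq (Finset.ne_of_mem_erase hj).symm)

end Polynomial

theorem isUnit_natCast_sub_natCast {A : Type*} [Ring A] [Algebra ℚ A] {m n : ℕ} (h : m ≠ n) :
    IsUnit ((m : A) - n) := by
  have : ((m : ℚ) - n) ≠ 0 := sub_ne_zero.2 (Nat.cast_injective.ne h)
  simpa using this.isUnit.map (algebraMap ℚ A)

namespace Module.End

variable {R M ι : Type*} [CommRing R] [AddCommGroup M] [Module R M]

theorem eigenspace_eq_ker_aeval_X_sub_C (f : End R M) (μ : R) :
    f.eigenspace μ = LinearMap.ker (aeval f (X - C μ)) := by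
  rw [eigenspace_def, map_sub, aeval_X, aeval_C, Algebra.algebraMap_eq_smul_one]

theorem iSupIndep_eigenspace_of_isUnit_sub (f : End R M) {μ : ι → R}
    (hμ : Pairwise fun i j => IsUnit (μ i - μ j)) :
    iSupIndep fun i => f.eigenspace (μ i) := by
  simp_rw [eigenspace_eq_ker_aeval_X_sub_C]
  exact iSupIndep_ker_aeval f fun i j hij => isCoprime_X_sub_C_of_isUnit_sub (hμ hij)

theorem ker_aeval_prod_X_sub_C_eq_iSup_eigenspace (f : End R M) {μ : ι → R} {s : Finset ι}
    (hμ : (s : Set ι).Pairwise fun i j => IsUnit (μ i - μ j)) :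
    LinearMap.ker (aeval f (∏ i ∈ s, (X - C (μ i)))) = ⨆ i ∈ s, f.eigenspace (μ i) := by
  simp_rw [eigenspace_eq_ker_aeval_X_sub_C]
  exact (iSup_ker_aeval_eq_ker_aeval_prod f
    fun i hi j hj hij => isCoprime_X_sub_C_of_isUnit_sub (hμ hi hj hij)).symm

theorem disjoint_eigenspace_mul_ker (f g : End R M) {c : R} (hc : IsUnit c) :
    Disjoint ((f * g).eigenspace c) (LinearMap.ker g) := by
  refine Submodule.disjoint_def.2 fun x hx hgx => ?_
  rw [mem_eigenspace_iff, mul_apply, LinearMap.mem_ker.1 hgx, map_zero] at hx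
  exact hc.smul_eq_zero.1 hx.symm

theorem iSupIndep_eigenspace_natCast [Algebra ℚ R] (f : End R M) :
    iSupIndep fun n : ℕ => f.eigenspace (n : R) :=
  f.iSupIndep_eigenspace_of_isUnit_sub fun _ _ hmn => isUnit_natCast_sub_natCast hmn

end Module.End

namespace WeylRelation

section Ring

variable {A R : Type*} [CommRing A] [Ring R] [Algebra A R] {y d : R}

theorem euler_mul_pow (hyd : y * d - d * y = 1) (k : ℕ) :
    y * d * y ^ k = y ^ k * (y * d - k) := by
  have hdy : d * y = y * d - 1 := by rw [← hyd]; abel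
  induction k with
  | zero => simp
  | succ k ih =>
    calc y * d * y ^ (k + 1) = y ^ k * (y * d - k) * y := by rw [pow_succ, ← mul_assoc, ih]
      _ = y ^ k * (y * (d * y) - k * y) := by noncomm_ring
      _ = y ^ (k + 1) * (y * d - (k + 1 : ℕ)) := by
        rw [hdy, pow_succ, (Nat.cast_commute k y).eq]; push_cast; noncomm_ring

theorem euler_mul_d (hyd : y * d - d * y = 1) : y * d * d = d * (y * d + 1) := by
  calc y * d * d = (y * d - d * y) * d + d * (y * d) := by noncomm_ring
    _ = d * (y * d + 1) := by rw [hyd]; noncomm_ring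

theorem pow_mul_pow_eq_aeval (hyd : y * d - d * y = 1) (k : ℕ) :
    d ^ k * y ^ k = aeval (y * d) (∏ j ∈ Finset.range k, (X - C ((j + 1 : ℕ) : A))) := by
  have hdy : d * y = y * d - 1 := by rw [← hyd]; abel
  induction k with
  | zero => simp
  | succ k ih =>
    calc d ^ (k + 1) * y ^ (k + 1) = d ^ k * ((d * y) * y ^ k) := by
          rw [pow_succ, pow_succ']; noncomm_ring
      _ = d ^ k * y ^ k * (y * d - (k + 1 : ℕ)) := by
          rw [hdy, sub_mul, euler_mul_pow hyd]; push_cast; noncomm_ring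
      _ = _ := by
          rw [ih, Finset.prod_range_succ, map_mul, map_sub, aeval_X, aeval_C, map_natCast]

end Ring

section Module

variable {A N : Type*} [CommRing A] [AddCommGroup N] [Module A N] {Y D : End A N} {c : A}

open End

theorem apply_mem_eigenspace_add_one (hYD : Y * D - D * Y = 1) {x : N}
    (hx : x ∈ (Y * D).eigenspace c) : D x ∈ (Y * D).eigenspace (c + 1) := by
  rw [mem_eigenspace_iff] at hx ⊢
  calc (Y * D) (D x) = D ((Y * D) x + x) := by
        simpa using LinearMap.congr_fun (euler_mul_d hYD) x
    _ = (c + 1) • D x := by rw [hx, map_add, map_smul, add_smul, one_smul]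

theorem apply_apply_of_mem_eigenspace_add_one (hYD : Y * D - D * Y = 1) {z : N}
    (hz : z ∈ (Y * D).eigenspace (c + 1)) : D (Y z) = c • z := by
  have hDY : D * Y = Y * D - 1 := by rw [← hYD]; abel
  rw [mem_eigenspace_iff] at hz
  calc D (Y z) = (Y * D) z - z := by simpa using LinearMap.congr_fun hDY z
    _ = c • z := by rw [hz, add_smul, one_smul, add_sub_cancel_right]

theorem apply_mem_eigenspace_of_mem_eigenspace_add_one (hYD : Y * D - D * Y = 1) {z : N}
    (hz : z ∈ (Y * D).eigenspace (c + 1)) : Y z ∈ (Y * D).eigenspace c := by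
  rw [mem_eigenspace_iff, mul_apply, apply_apply_of_mem_eigenspace_add_one hYD hz, map_smul]

theorem map_eigenspace_eq (hYD : Y * D - D * Y = 1) (hc : IsUnit c) :
    Submodule.map D ((Y * D).eigenspace c) = (Y * D).eigenspace (c + 1) := by
  refine le_antisymm (Submodule.map_le_iff_le_comap.2 fun x hx =>
    apply_mem_eigenspace_add_one hYD hx) fun z hz => ?_
  refine ⟨(↑hc.unit⁻¹ : A) • Y z,
    Submodule.smul_mem _ _ (apply_mem_eigenspace_of_mem_eigenspace_add_one hYD hz), ?_⟩
  rw [map_smul, apply_apply_of_mem_eigenspace_add_one hYD hz, smul_smul, hc.val_inv_mul,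
    one_smul]

variable [Algebra ℚ A]

theorem iSup_eigenspace_eq_top (hYD : Y * D - D * Y = 1)
    (htors : ∀ x : N, ∃ k : ℕ, (Y ^ k) x = 0) :
    ⨆ i : {i : ℕ // 1 ≤ i}, (Y * D).eigenspace (i : A) = ⊤ := by
  refine eq_top_iff.2 fun x _ => ?_
  obtain ⟨k, hk⟩ := htors x
  have hx : x ∈ LinearMap.ker
      (aeval (Y * D) (∏ j ∈ Finset.range k, (X - C ((j + 1 : ℕ) : A)))) := by
    rw [← pow_mul_pow_eq_aeval hYD, LinearMap.mem_ker, mul_apply, hk, map_zero]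
  rw [ker_aeval_prod_X_sub_C_eq_iSup_eigenspace _
    fun i _ j _ hij => isUnit_natCast_sub_natCast (by omega)] at hx
  exact iSup₂_le (fun j _ => le_iSup (fun i : {i : ℕ // 1 ≤ i} => (Y * D).eigenspace (i : A))
    ⟨j + 1, by omega⟩) hx

end Module

end WeylRelation

/-- A right module is encoded by the operators of right multiplication, so `n · (a * b)` is
`(ρb ∘ₗ ρa) n`: the relation `[∂_y, y] = 1` reads `ρy ∘ₗ ρdy - ρdy ∘ₗ ρy = id` and
`h = ∂_y · y` acts as `ρy ∘ₗ ρdy`. -/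
theorem stmt10_general (A : Type*) [CommRing A] [Algebra ℚ A]
    (N : Type*) [AddCommGroup N] [Module A N]
    (ρy ρdy : Module.End A N)
    (hy : ρy ∘ₗ ρdy - ρdy ∘ₗ ρy = LinearMap.id)
    (htors : ∀ x : N, ∃ k : ℕ, (ρy ^ k) x = 0) :
    (DirectSum.IsInternal fun i : {i : ℕ // 1 ≤ i} =>
        LinearMap.ker ((ρy ∘ₗ ρdy) - ((i : ℕ) : A) • (LinearMap.id : Module.End A N)))
    ∧ (∀ i : ℕ, 1 ≤ i →
        Submodule.map ρdy
            (LinearMap.ker ((ρy ∘ₗ ρdy) - ((i : A) • (LinearMap.id : Module.End A N))))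
          = LinearMap.ker ((ρy ∘ₗ ρdy) - (((i : ℕ) + 1 : A) • (LinearMap.id : Module.End A N)))
        ∧ Disjoint
            (LinearMap.ker ((ρy ∘ₗ ρdy) - ((i : A) • (LinearMap.id : Module.End A N))))
            (LinearMap.ker ρdy)) := by
  simp only [← End.mul_eq_comp, ← End.one_eq_id, ← End.eigenspace_def] at hy ⊢
  have hunit : ∀ i : ℕ, 1 ≤ i → IsUnit (i : A) := fun i hi => by
    simpa using isUnit_natCast_sub_natCast (A := A) (m := i) (n := 0) (by omega)
  refine ⟨?_, fun i hi => ⟨WeylRelation.map_eigenspace_eq hy (hunit i hi),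
    End.disjoint_eigenspace_mul_ker _ _ (hunit i hi)⟩⟩
  rw [DirectSum.isInternal_submodule_iff_iSupIndep_and_iSup_eq_top]
  exact ⟨(End.iSupIndep_eigenspace_natCast _).comp Subtype.val_injective,
    WeylRelation.iSup_eigenspace_eq_top hy htors⟩

/-- Kashiwara decomposition in one variable: let `A` be a
`ℚ`-algebra and `N` a right module over `A[v,y,∂_v,∂_y]`, encoded by the four
commuting-data right-action operators `ρv, ρy, ρdv, ρdy ∈ End_A(N)`
(for a right module, `n·(ab) = (n·a)·b`, so the relation `[∂_y, y] = 1`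
becomes `ρy ∘ ρdy − ρdy ∘ ρy = id`, and similarly for `v, ∂_v`; all other
pairs commute).  Assume every element of `N` is annihilated by some power
of `y`.  Let `h = ∂_y·y` act on the right, i.e. `h = ρy ∘ ρdy`, and let
`E i = ker (h − i·id)` be its `i`-eigenspace.  Then `N = ⊕_{i≥1} E i`, and
for every `i ≥ 1` the right action of `∂_y` maps `E i` bijectively onto
`E (i+1)`. -/
theorem stmt10 (A : Type*) [CommRing A] [Algebra ℚ A]
    (N : Type*) [AddCommGroup N] [Module A N]
    (ρv ρy ρdv ρdy : Module.End A N)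
    (hv : ρv ∘ₗ ρdv - ρdv ∘ₗ ρv = LinearMap.id)
    (hy : ρy ∘ₗ ρdy - ρdy ∘ₗ ρy = LinearMap.id)
    (hvy : ρv ∘ₗ ρy = ρy ∘ₗ ρv)
    (hvdy : ρv ∘ₗ ρdy = ρdy ∘ₗ ρv)
    (hdvy : ρdv ∘ₗ ρy = ρy ∘ₗ ρdv)
    (hdvdy : ρdv ∘ₗ ρdy = ρdy ∘ₗ ρdv)
    (htors : ∀ x : N, ∃ k : ℕ, (ρy ^ k) x = 0) :
    (DirectSum.IsInternal fun i : {i : ℕ // 1 ≤ i} =>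
        LinearMap.ker ((ρy ∘ₗ ρdy) - ((i : ℕ) : A) • (LinearMap.id : Module.End A N)))
    ∧ (∀ i : ℕ, 1 ≤ i →
        Submodule.map ρdy
            (LinearMap.ker ((ρy ∘ₗ ρdy) - ((i : A) • (LinearMap.id : Module.End A N))))
          = LinearMap.ker ((ρy ∘ₗ ρdy) - (((i : ℕ) + 1 : A) • (LinearMap.id : Module.End A N)))
        ∧ Disjoint
            (LinearMap.ker ((ρy ∘ₗ ρdy) - ((i : A) • (LinearMap.id : Module.End A N))))
            (LinearMap.ker ρdy)) :=
  stmt10_general A N ρy ρdy hy htors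
end

section
/- The submodule of elements killed by a power of y recovers the pushforward: Let A be a ℚ-algebra, M a right module over A[t]⟨∂_t⟩, and N = Δ_! M = ⊕_{n≥0} M∂_y^n with its right A[v,y]⟨∂_v',∂_y⟩-action as above. Then (i) the submodule of N annihilated by y is exactly M∂_y^0 ≅ M (Δ^! Δ_! M ≅ M), and (ii) for every n ≥ 0, the submodule of N annihilated by y^{n+1} is exactly ⊕_{k=0}^{n} M∂_y^k. -/
/-!
Applying `y` lowers the `∂_y`-degree by one and multiplies by `-n`, so `y^p` sends the component
in degree `j + p` to degree `j`, scaled by `(-1)^p (j+1)(j+2)⋯(j+p)`. Over a `ℚ`-algebra these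
scalars are units, hence `y^p` kills exactly the elements supported in degrees `< p`.
-/

namespace Stmt13

variable (A : Type*) [CommRing A] [Algebra ℚ A]
variable (M : Type*) [AddCommGroup M] [Module A M]
variable (T Dt : Module.End A M)

/-- `N = Δ_! M = ⊕_{n≥0} M·∂_y^n` as `ℕ →₀ M`. -/
abbrev N := ℕ →₀ M

/-- Right action of `y`: `(m ∂_y^n)·y = -n · m ∂_y^{n-1}`. -/
noncomputable def opY : Module.End A (N M) :=
  Finsupp.lsum A fun n => Finsupp.lsingle (n - 1) ∘ₗ ((-(n : A)) • LinearMap.id)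

omit [Algebra ℚ A] in
@[simp]
lemma opY_single (n : ℕ) (m : M) :
    opY A M (Finsupp.single n m) = Finsupp.single (n - 1) ((-(n : A)) • m) := by
  simp [opY]

omit [Algebra ℚ A] in
lemma opY_apply (f : N M) (j : ℕ) :
    opY A M f j = (-((j + 1 : ℕ) : A)) • f (j + 1) := by
  induction f using Finsupp.induction_linear with
  | zero => simp
  | add f g hf hg => simp only [map_add, Finsupp.add_apply, hf, hg, smul_add]
  | single n m =>
    rcases n with _ | n
    · simp
    · by_cases h : n = j <;> simp [h]

omit [Algebra ℚ A] in
lemma opY_pow_apply (p : ℕ) (f : N M) (j : ℕ) :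
    (opY A M ^ p) f j = ((-1) ^ p * ((j + 1).ascFactorial p : A)) • f (j + p) := by
  induction p generalizing f with
  | zero => simp
  | succ p ih =>
    rw [pow_succ, Module.End.mul_apply, ih, opY_apply, smul_smul, Nat.ascFactorial_succ,
      ← add_assoc]
    congr 1
    push_cast
    ring

lemma isUnit_natCast_of_ne_zero {n : ℕ} (hn : n ≠ 0) : IsUnit (n : A) :=
  map_natCast (algebraMap ℚ A) n ▸ (isUnit_iff_ne_zero.2 (Nat.cast_ne_zero.2 hn)).map _

lemma ker_opY_pow (p : ℕ) :
    LinearMap.ker (opY A M ^ p) = Finsupp.supported M A (Set.Iio p) := by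
  ext f
  have hunit (j : ℕ) : IsUnit ((-1) ^ p * ((j + 1).ascFactorial p : A)) :=
    (isUnit_neg_one.pow p).mul
      (isUnit_natCast_of_ne_zero A (Nat.ascFactorial_pos j p).ne')
  simp only [LinearMap.mem_ker, Finsupp.ext_iff, opY_pow_apply, (hunit _).smul_eq_zero,
    Finsupp.coe_zero, Pi.zero_apply, Finsupp.mem_supported', Set.mem_Iio, not_lt]
  exact ⟨fun h n hn => Nat.sub_add_cancel hn ▸ h (n - p), fun h j => h _ (Nat.le_add_left p j)⟩

omit [Algebra ℚ A] in
lemma range_lsingle_eq_supported_singleton {α : Type*} (a : α) :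
    LinearMap.range (Finsupp.lsingle (M := M) (R := A) a) = Finsupp.supported M A {a} := by
  ext f
  simp only [LinearMap.mem_range, Finsupp.lsingle_apply, Finsupp.mem_supported,
    Finset.coe_subset_singleton, Finsupp.support_subset_singleton', eq_comm]

omit [Algebra ℚ A] in
lemma iSup_range_lsingle_fin (n : ℕ) :
    ⨆ j : Fin n, LinearMap.range (Finsupp.lsingle (M := M) (R := A) (j : ℕ)) =
      Finsupp.supported M A (Set.Iio n) := by
  simp only [range_lsingle_eq_supported_singleton, ← Finsupp.supported_iUnion,
    Set.iUnion_singleton_eq_range, Fin.range_val]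

theorem stmt13 :
    (LinearMap.ker (opY A M) = LinearMap.range (Finsupp.lsingle (M := M) (R := A) 0))
    ∧ (∀ k : ℕ, LinearMap.ker ((opY A M) ^ (k + 1)) =
        ⨆ j : Fin (k + 1),
          LinearMap.range (Finsupp.lsingle (M := M) (R := A) (j : ℕ))) := by
  refine ⟨?_, fun k => by rw [ker_opY_pow, iSup_range_lsingle_fin]⟩
  rw [← pow_one (opY A M), ker_opY_pow, range_lsingle_eq_supported_singleton, Order.Iio_one]

end Stmt13
end
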